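/- arXiv:math/0610634 — 6 statements merged into one kernel-verified Lean document; each statement's English description precedes it below -/
import Mathlib

section
/- The pair (C, A) is output-stable (i.e., the series sum over all words v in F_d of ||C A^v x||^2 converges for every x in X) if and only if the generalized Stein inequality H - A_1* H A_1 - ... - A_d* H A_d >= C* C has a positive semidefinite bounded solution H. -/
/-!
If `H` solves the Stein inequality, `q x = re ⟪H x, x⟫` is a nonnegative storage function:
`‖C x‖² + ∑ j, q (A j x) ≤ q x`. Iterating this over the words of length `< N` bounds the
partial sums of the output energy by `q x`.

Conversely, output stability makes `O x = (C A^v x)_v` a linear map into `ℓ²(F_d, Y)`, bounded by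
the closed graph theorem since its coordinates are continuous. Splitting off the letter of a word
that acts first gives `‖O x‖² = ‖C x‖² + ∑ j, ‖O (A j x)‖²`, i.e. the Gramian `O* O` solves the
Stein equation with equality.
-/

open ContinuousLinearMap

noncomputable section

variable {X Y : Type*}
  [NormedAddCommGroup X] [InnerProductSpace ℂ X] [CompleteSpace X]
  [NormedAddCommGroup Y] [InnerProductSpace ℂ Y] [CompleteSpace Y]

/-- `A^v`: for a word `v = i_N … i_1` (stored as the list `[i_N, …, i_1]`), the
product `A_{i_N} ∘ A_{i_{N-1}} ∘ ⋯ ∘ A_{i_1}`. -/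
def wordProd {d : ℕ} (A : Fin d → X →L[ℂ] X) (v : List (Fin d)) : X →L[ℂ] X :=
  (v.map A).prod

/-- `A^w` for a word of length `N` encoded as a function `w : Fin N → Fin d`. -/
def funProd {d N : ℕ} (A : Fin d → X →L[ℂ] X) (w : Fin N → Fin d) : X →L[ℂ] X :=
  wordProd A (List.ofFn w)

section ListSums

variable {α : Type*} [Fintype α]

theorem summable_list_iff_summable_sum_ofFn {f : List α → ℝ} (hf : 0 ≤ f) :
    Summable f ↔ Summable fun n => ∑ w : Fin n → α, f (List.ofFn w) := by
  refine (List.equivSigmaTuple.symm.summable_iff.symm.trans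
    (summable_sigma_of_nonneg fun _ => hf _)).trans ?_
  simp [tsum_fintype, Summable.of_finite]

theorem tsum_list_eq_tsum_sum_ofFn {f : List α → ℝ} (hf : Summable f) :
    ∑' v, f v = ∑' n, ∑ w : Fin n → α, f (List.ofFn w) := by
  rw [← List.equivSigmaTuple.symm.tsum_eq]
  exact (List.equivSigmaTuple.symm.summable_iff.2 hf).tsum_sigma.trans (by simp [tsum_fintype])

end ListSums

section Output

omit [CompleteSpace X] [CompleteSpace Y]

variable {d : ℕ} (A : Fin d → X →L[ℂ] X) (C : X →L[ℂ] Y)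

theorem funProd_snoc {n : ℕ} (w : Fin n → Fin d) (j : Fin d) :
    funProd A (Fin.snoc w j) = funProd A w ∘L A j := by
  rw [funProd, funProd, List.ofFn_succ']
  simp [wordProd, List.prod_append]
  rfl

def outputEnergy (n : ℕ) (x : X) : ℝ := ∑ w : Fin n → Fin d, ‖C (funProd A w x)‖ ^ 2

theorem outputEnergy_zero (x : X) : outputEnergy A C 0 x = ‖C x‖ ^ 2 := by
  simp [outputEnergy, funProd, wordProd]

theorem outputEnergy_succ (n : ℕ) (x : X) :
    outputEnergy A C (n + 1) x = ∑ j, outputEnergy A C n (A j x) := by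
  rw [outputEnergy, ← (Fin.snocEquiv fun _ => Fin d).sum_comp, Fintype.sum_prod_type]
  simp [outputEnergy, Fin.snocEquiv, funProd_snoc]

theorem summable_output_iff (x : X) :
    (Summable fun v : List (Fin d) => ‖C (wordProd A v x)‖ ^ 2) ↔
      Summable fun n => outputEnergy A C n x :=
  summable_list_iff_summable_sum_ofFn fun _ => by positivity

theorem tsum_output_eq_tsum_outputEnergy {x : X}
    (hx : Summable fun v : List (Fin d) => ‖C (wordProd A v x)‖ ^ 2) :
    ∑' v : List (Fin d), ‖C (wordProd A v x)‖ ^ 2 = ∑' n, outputEnergy A C n x :=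
  tsum_list_eq_tsum_sum_ofFn hx

theorem tsum_output_eq_add_sum {x : X}
    (hx : Summable fun v : List (Fin d) => ‖C (wordProd A v x)‖ ^ 2)
    (hAx : ∀ j, Summable fun v : List (Fin d) => ‖C (wordProd A v (A j x))‖ ^ 2) :
    ∑' v : List (Fin d), ‖C (wordProd A v x)‖ ^ 2 =
      ‖C x‖ ^ 2 + ∑ j, ∑' v : List (Fin d), ‖C (wordProd A v (A j x))‖ ^ 2 := by
  simp only [tsum_output_eq_tsum_outputEnergy A C hx,
    tsum_output_eq_tsum_outputEnergy A C (hAx _), ((summable_output_iff A C x).1 hx).tsum_eq_zero_add,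
    outputEnergy_zero, outputEnergy_succ]
  rw [Summable.tsum_finsetSum fun j _ => (summable_output_iff A C _).1 (hAx j)]

theorem sum_range_outputEnergy_le {q : X → ℝ} (hq0 : ∀ y, 0 ≤ q y)
    (hq : ∀ y, ‖C y‖ ^ 2 + ∑ j, q (A j y) ≤ q y) (N : ℕ) (x : X) :
    ∑ n ∈ Finset.range N, outputEnergy A C n x ≤ q x := by
  induction N generalizing x with
  | zero => simpa using hq0 x
  | succ N ih =>
    calc ∑ n ∈ Finset.range (N + 1), outputEnergy A C n x
        = ‖C x‖ ^ 2 + ∑ j, ∑ n ∈ Finset.range N, outputEnergy A C n (A j x) := by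
          simp only [Finset.sum_range_succ', outputEnergy_zero, outputEnergy_succ]
          rw [Finset.sum_comm, add_comm]
      _ ≤ ‖C x‖ ^ 2 + ∑ j, q (A j x) := by gcongr with j; exact ih _
      _ ≤ q x := hq x

theorem summable_output_of_storage {q : X → ℝ} (hq0 : ∀ y, 0 ≤ q y)
    (hq : ∀ y, ‖C y‖ ^ 2 + ∑ j, q (A j y) ≤ q y) (x : X) :
    Summable fun v : List (Fin d) => ‖C (wordProd A v x)‖ ^ 2 :=
  (summable_output_iff A C x).2 <| summable_of_sum_range_le
    (fun _ => Finset.sum_nonneg fun _ _ => by positivity) (sum_range_outputEnergy_le A C hq0 hq · x)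

end Output

theorem LinearMap.continuous_of_continuous_lp_apply {𝕜 E ι : Type*} {F : ι → Type*}
    [NontriviallyNormedField 𝕜] [NormedAddCommGroup E] [NormedSpace 𝕜 E] [CompleteSpace E]
    [∀ i, NormedAddCommGroup (F i)] [∀ i, NormedSpace 𝕜 (F i)] [∀ i, CompleteSpace (F i)]
    {p : ENNReal} [Fact (1 ≤ p)] (g : E →ₗ[𝕜] lp F p) (hg : ∀ i, Continuous fun x => g x i) :
    Continuous g :=
  g.continuous_of_seq_closed_graph fun _ x y hu hgu => lp.ext <| funext fun i =>
    tendsto_nhds_unique (((lp.lipschitzWith_one_eval p i).continuous.tendsto y).comp hgu)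
      (((hg i).tendsto x).comp hu)

section Gramian

variable {d : ℕ} (A : Fin d → X →L[ℂ] X) (C : X →L[ℂ] Y)

theorem stein_dissipation {H : X →L[ℂ] X}
    (hD : (H - ∑ j, adjoint (A j) ∘L H ∘L A j - adjoint C ∘L C).IsPositive) (y : X) :
    ‖C y‖ ^ 2 + ∑ j, RCLike.re (inner ℂ (H (A j y)) (A j y)) ≤ RCLike.re (inner ℂ (H y) y) := by
  have h := hD.re_inner_nonneg_left y
  simp only [sub_apply, _root_.sum_apply, comp_apply, inner_sub_left, sum_inner,
    adjoint_inner_left, map_sub, map_sum, inner_self_eq_norm_sq] at h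
  linarith

variable (hS : ∀ x : X, Summable fun v : List (Fin d) => ‖C (wordProd A v x)‖ ^ 2)

def observabilityMap : X →ₗ[ℂ] lp (fun _ : List (Fin d) => Y) 2 where
  toFun x := ⟨fun v => C (wordProd A v x), (memℓp_gen_iff (by norm_num)).2 (by simpa using hS x)⟩
  map_add' x y := lp.ext <| funext fun v => (C ∘L wordProd A v).map_add x y
  map_smul' c x := lp.ext <| funext fun v => (C ∘L wordProd A v).map_smul c x

def observability : X →L[ℂ] lp (fun _ : List (Fin d) => Y) 2 :=
  ⟨observabilityMap A C hS, (observabilityMap A C hS).continuous_of_continuous_lp_apply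
    fun v => (C ∘L wordProd A v).continuous⟩

theorem observability_apply (x : X) (v : List (Fin d)) :
    observability A C hS x v = C (wordProd A v x) :=
  rfl

theorem norm_observability_sq (x : X) :
    ‖observability A C hS x‖ ^ 2 = ∑' v : List (Fin d), ‖C (wordProd A v x)‖ ^ 2 := by
  simpa [observability_apply] using
    lp.norm_rpow_eq_tsum (p := 2) (by norm_num) (observability A C hS x)

def observabilityGramian : X →L[ℂ] X := adjoint (observability A C hS) ∘L observability A C hS

theorem observabilityGramian_stein_eq :
    observabilityGramian A C hS - ∑ j, adjoint (A j) ∘L observabilityGramian A C hS ∘L A j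
      - adjoint C ∘L C = 0 := by
  refine coe_injective <| ((inner_map_self_eq_zero _).1 fun x => ?_).trans toLinearMap_zero.symm
  have h := tsum_output_eq_add_sum A C (hS x) fun j => hS (A j x)
  simp only [← norm_observability_sq A C hS] at h
  simp only [coe_coe, observabilityGramian, sub_apply, _root_.sum_apply, comp_apply, inner_sub_left,
    sum_inner, adjoint_inner_left, inner_self_eq_norm_sq_to_K]
  have hC := congrArg ((↑) : ℝ → ℂ) h
  push_cast at hC
  linear_combination hC

end Gramian

/-- The pair (C, A) is output-stable iff the generalized Stein inequality
`H - ∑_j A_j* H A_j ≥ C* C` has a positive semidefinite bounded solution. -/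
theorem stmt2 {d : ℕ} (A : Fin d → X →L[ℂ] X) (C : X →L[ℂ] Y) :
    (∀ x : X, Summable fun v : List (Fin d) => ‖C (wordProd A v x)‖ ^ 2) ↔
      ∃ H : X →L[ℂ] X, H.IsPositive ∧
        (H - ∑ j, adjoint (A j) ∘L H ∘L A j - adjoint C ∘L C).IsPositive := by
  constructor
  · intro hS
    refine ⟨observabilityGramian A C hS, isPositive_adjoint_comp_self _, ?_⟩
    rw [observabilityGramian_stein_eq]
    exact isPositive_zero
  · rintro ⟨H, hH, hD⟩
    exact summable_output_of_storage A C hH.re_inner_nonneg_left (stein_dissipation A C hD)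

end
end

section
/- If (C, A) is output-stable, then the observability gramian G = sum over all words v in F_d of A^{v*} C* C A^v (converging in the strong operator topology) satisfies the generalized Stein equation G - A_1* G A_1 - ... - A_d* G A_d = C* C, and G <= H for every positive semidefinite solution H of the Stein inequality H - sum_j A_j* H A_j >= C* C. -/
open ContinuousLinearMap

noncomputable section

variable {X Y : Type*}
  [NormedAddCommGroup X] [InnerProductSpace ℂ X] [CompleteSpace X]
  [NormedAddCommGroup Y] [InnerProductSpace ℂ Y] [CompleteSpace Y]

/-! Removing the last letter of each word, `v = v' j`, splits the series defining `G` into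
`C* C + ∑_j A_j* G A_j`, which is the Stein equation. For minimality, iterating the Stein
inequality `H ≥ C* C + ∑_j A_j* H A_j` gives, for every `N`,
`H ≥ ∑_{|w| < N} A^{w*} C* C A^w + ∑_{|w| = N} A^{w*} H A^w`; the last sum is positive, and
evaluating the quadratic forms at `x` and letting `N → ∞` gives `⟪G x, x⟫ ≤ ⟪H x, x⟫`. -/

open scoped InnerProductSpace

section Summation

variable {M : Type*} [AddCommMonoid M] [TopologicalSpace M] [ContinuousAdd M]

theorem hasSum_prod_of_fintype {ι β : Type*} [Fintype ι] {f : ι × β → M}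
    {a : ι → M} (h : ∀ i, HasSum (fun b => f (i, b)) (a i)) : HasSum f (∑ i, a i) := by
  classical
  have hext : ∀ i, HasSum (Function.extend (Prod.mk i) (fun b => f (i, b)) 0) (a i) := fun i =>
    (hasSum_extend_zero (Prod.mk_right_injective i)).2 (h i)
  convert hasSum_sum fun i (_ : i ∈ Finset.univ) => hext i with p
  obtain ⟨i, b⟩ := p
  rw [Finset.sum_eq_single i]
  · exact ((Prod.mk_right_injective i).extend_apply (fun b => f (i, b)) 0 b).symm
  · intro j _ hj
    refine Function.extend_apply' _ _ _ ?_
    rintro ⟨c, hc⟩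
    exact hj (congrArg Prod.fst hc)
  · simp

theorem hasSum_list_of_hasSum_concat {α : Type*} [Fintype α]
    {f : List α → M} {a : α → M} (h : ∀ j, HasSum (fun v : List α => f (v.concat j)) (a j)) :
    HasSum f (f [] + ∑ j, a j) := by
  classical
  have hg : (fun p : α × List α => p.2.concat p.1).Injective := by
    rintro ⟨j, v⟩ ⟨k, w⟩ h
    simp_all
  have hsplit := (hasSum_ite_eq ([] : List α) (f [])).add ((hasSum_extend_zero hg).2
    (hasSum_prod_of_fintype (f := fun p : α × List α => f (p.2.concat p.1)) h))
  refine hsplit.congr_fun fun v => ?_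
  by_cases hv : v = []
  · subst hv
    rw [Function.extend_apply' _ _ _ (by simp)]
    simp
  · obtain ⟨p, rfl⟩ : v ∈ Set.range (fun p : α × List α => p.2.concat p.1) :=
      ⟨(v.getLast hv, v.dropLast), by simp [List.dropLast_append_getLast]⟩
    rw [hg.extend_apply]
    simp

theorem HasSum.sum_ofFn_length [RegularSpace M] {α : Type*} [Fintype α] {f : List α → M}
    {a : M} (h : HasSum f a) : HasSum (fun n => ∑ w : Fin n → α, f (List.ofFn w)) a :=
  (List.equivSigmaTuple.symm.hasSum_iff.2 h).sigma fun _ => hasSum_fintype _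

end Summation

theorem ContinuousLinearMap.isSymmetric_of_hasSum {𝕜 E ι : Type*} [RCLike 𝕜]
    [NormedAddCommGroup E] [InnerProductSpace 𝕜 E] {T : ι → E →L[𝕜] E} {G : E →L[𝕜] E}
    (hT : ∀ i, (T i).IsSymmetric) (hG : ∀ x, HasSum (fun i => T i x) (G x)) :
    G.IsSymmetric := by
  intro x y
  have hleft : HasSum (fun i => ⟪T i x, y⟫_𝕜) ⟪G x, y⟫_𝕜 := (innerSLFlip 𝕜 y).hasSum (hG x)
  have hright : HasSum (fun i => ⟪x, T i y⟫_𝕜) ⟪x, G y⟫_𝕜 := (innerSL 𝕜 x).hasSum (hG y)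
  exact hleft.unique (hright.congr_fun fun i => hT i x y)

theorem ContinuousLinearMap.adjoint_conj_mono {𝕜 E F : Type*} [RCLike 𝕜]
    [NormedAddCommGroup E] [InnerProductSpace 𝕜 E] [CompleteSpace E]
    [NormedAddCommGroup F] [InnerProductSpace 𝕜 F] [CompleteSpace F]
    {T T' : E →L[𝕜] E} (h : T ≤ T') (S : F →L[𝕜] E) :
    adjoint S ∘L T ∘L S ≤ adjoint S ∘L T' ∘L S := by
  rw [le_def] at h ⊢
  simpa [comp_sub, sub_comp] using h.adjoint_conj S

section Words

theorem wordProd_concat {E : Type*} [NormedAddCommGroup E] [InnerProductSpace ℂ E] {d : ℕ}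
    (A : Fin d → E →L[ℂ] E) (v : List (Fin d)) (j : Fin d) :
    wordProd A (v.concat j) = wordProd A v ∘L A j := by
  simp [wordProd, mul_def]

theorem funProd_cons {E : Type*} [NormedAddCommGroup E] [InnerProductSpace ℂ E] {d N : ℕ}
    (A : Fin d → E →L[ℂ] E) (j : Fin d) (w : Fin N → Fin d) :
    funProd A (Fin.cons j w) = A j ∘L funProd A w := by
  simp [funProd, wordProd, List.ofFn_succ, mul_def]

variable {d : ℕ} (A : Fin d → X →L[ℂ] X)

def wordConjSum (T : X →L[ℂ] X) (n : ℕ) : X →L[ℂ] X :=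
  ∑ w : Fin n → Fin d, adjoint (funProd A w) ∘L T ∘L funProd A w

theorem wordConjSum_zero (T : X →L[ℂ] X) : wordConjSum A T 0 = T := by
  simp [wordConjSum, funProd, wordProd, one_def, adjoint_id]

theorem wordConjSum_succ (T : X →L[ℂ] X) (n : ℕ) :
    wordConjSum A T (n + 1) = wordConjSum A (∑ j, adjoint (A j) ∘L T ∘L A j) n := by
  simp only [wordConjSum, comp_finsetSum, finsetSum_comp]
  rw [← (Fin.consEquiv fun _ => Fin d).sum_comp, Fintype.sum_prod_type, Finset.sum_comm]
  refine Finset.sum_congr rfl fun w _ => Finset.sum_congr rfl fun j _ => ?_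
  rw [show (Fin.consEquiv fun _ => Fin d) (j, w) = Fin.cons j w from rfl, funProd_cons,
    adjoint_comp]
  simp only [comp_assoc]

theorem wordConjSum_add (T T' : X →L[ℂ] X) (n : ℕ) :
    wordConjSum A (T + T') n = wordConjSum A T n + wordConjSum A T' n := by
  simp [wordConjSum, add_comp, comp_add, Finset.sum_add_distrib]

theorem wordConjSum_mono {T T' : X →L[ℂ] X} (h : T ≤ T') (n : ℕ) :
    wordConjSum A T n ≤ wordConjSum A T' n :=
  Finset.sum_le_sum fun w _ => adjoint_conj_mono h (funProd A w)

theorem wordConjSum_nonneg {T : X →L[ℂ] X} (h : 0 ≤ T) (n : ℕ) : 0 ≤ wordConjSum A T n := by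
  simpa [wordConjSum] using wordConjSum_mono A h n

theorem sum_range_wordConjSum_add_le {K H : X →L[ℂ] X}
    (h : K + ∑ j, adjoint (A j) ∘L H ∘L A j ≤ H) (N : ℕ) :
    ∑ n ∈ Finset.range N, wordConjSum A K n + wordConjSum A H N ≤ H := by
  induction N with
  | zero => simp [wordConjSum_zero]
  | succ N ih =>
    calc ∑ n ∈ Finset.range (N + 1), wordConjSum A K n + wordConjSum A H (N + 1)
        = ∑ n ∈ Finset.range N, wordConjSum A K n
            + wordConjSum A (K + ∑ j, adjoint (A j) ∘L H ∘L A j) N := by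
          rw [Finset.sum_range_succ, wordConjSum_succ, wordConjSum_add, add_assoc]
      _ ≤ ∑ n ∈ Finset.range N, wordConjSum A K n + wordConjSum A H N := by
          gcongr
          exact wordConjSum_mono A h N
      _ ≤ H := ih

theorem sum_range_wordConjSum_le {K H : X →L[ℂ] X} (hH : 0 ≤ H)
    (h : K + ∑ j, adjoint (A j) ∘L H ∘L A j ≤ H) (N : ℕ) :
    ∑ n ∈ Finset.range N, wordConjSum A K n ≤ H :=
  (le_add_of_nonneg_right (wordConjSum_nonneg A hH N)).trans (sum_range_wordConjSum_add_le A h N)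

theorem re_inner_wordConjSum_adjoint_comp_self {Y : Type*} [NormedAddCommGroup Y]
    [InnerProductSpace ℂ Y] [CompleteSpace Y] (C : X →L[ℂ] Y) (n : ℕ) (x : X) :
    RCLike.re ⟪wordConjSum A (adjoint C ∘L C) n x, x⟫_ℂ =
      ∑ w : Fin n → Fin d, ‖C (funProd A w x)‖ ^ 2 := by
  simp [wordConjSum, adjoint_inner_left, inner_self_eq_norm_sq_to_K, ← Complex.ofReal_pow]

end Words

section Gramian

variable {d : ℕ}

def IsObservabilityGramian (A : Fin d → X →L[ℂ] X) (C : X →L[ℂ] Y) (G : X →L[ℂ] X) : Prop :=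
  ∀ x : X, HasSum
    (fun v : List (Fin d) => adjoint (wordProd A v) ((adjoint C) (C (wordProd A v x)))) (G x)

variable {A : Fin d → X →L[ℂ] X} {C : X →L[ℂ] Y} {G : X →L[ℂ] X}

theorem IsObservabilityGramian.stein_apply (hG : IsObservabilityGramian A C G) (x : X) :
    G x = adjoint C (C x) + ∑ j, adjoint (A j) (G (A j x)) := by
  have hconcat : ∀ j, HasSum (fun v : List (Fin d) =>
      adjoint (wordProd A (v.concat j)) (adjoint C (C (wordProd A (v.concat j) x))))
      (adjoint (A j) (G (A j x))) := fun j => by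
    refine ((adjoint (A j)).hasSum (hG (A j x))).congr_fun fun v => ?_
    rw [wordProd_concat, adjoint_comp]
    rfl
  simpa [wordProd, adjoint_one] using (hG x).unique (hasSum_list_of_hasSum_concat hconcat)

theorem IsObservabilityGramian.isSymmetric (hG : IsObservabilityGramian A C G) :
    G.IsSymmetric :=
  isSymmetric_of_hasSum (fun v => (isPositive_adjoint_comp_self (C ∘L wordProd A v)).isSymmetric)
    fun x => (hG x).congr_fun fun v => by simp [adjoint_comp]

theorem IsObservabilityGramian.hasSum_re_inner (hG : IsObservabilityGramian A C G) (x : X) :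
    HasSum (fun v : List (Fin d) => ‖C (wordProd A v x)‖ ^ 2) (RCLike.re ⟪G x, x⟫_ℂ) :=
  (RCLike.hasSum_re _ ((innerSLFlip ℂ x).hasSum (hG x))).congr_fun fun v => by
    simp [adjoint_inner_left, inner_self_eq_norm_sq_to_K, ← Complex.ofReal_pow]

theorem IsObservabilityGramian.re_inner_le (hG : IsObservabilityGramian A C G)
    {H : X →L[ℂ] X} (hH : 0 ≤ H) (h : adjoint C ∘L C + ∑ j, adjoint (A j) ∘L H ∘L A j ≤ H)
    (x : X) : RCLike.re ⟪G x, x⟫_ℂ ≤ RCLike.re ⟪H x, x⟫_ℂ := by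
  refine le_of_tendsto' (hG.hasSum_re_inner x).sum_ofFn_length.tendsto_sum_nat fun N => ?_
  have hN := ((le_def _ _).1 (sum_range_wordConjSum_le A hH h N)).re_inner_nonneg_left x
  simp_rw [sub_apply, inner_sub_left, map_sub, sum_apply, sum_inner, map_sum,
    re_inner_wordConjSum_adjoint_comp_self] at hN
  simpa [funProd] using hN

theorem IsObservabilityGramian.le_of_stein_le (hG : IsObservabilityGramian A C G)
    {H : X →L[ℂ] X} (hH : 0 ≤ H) (h : adjoint C ∘L C + ∑ j, adjoint (A j) ∘L H ∘L A j ≤ H) :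
    G ≤ H := by
  refine ⟨?_, fun x => ?_⟩
  · rw [toLinearMap_sub]
    exact ((nonneg_iff_isPositive H).1 hH).isSymmetric.sub hG.isSymmetric
  · simpa [reApplyInnerSelf, inner_sub_left] using hG.re_inner_le hH h x

end Gramian

theorem stmt3_general {d : ℕ} (A : Fin d → X →L[ℂ] X) (C : X →L[ℂ] Y) (G : X →L[ℂ] X)
    (hG : ∀ x : X, HasSum
      (fun v : List (Fin d) => adjoint (wordProd A v) ((adjoint C) (C (wordProd A v x))))
      (G x)) :
    G - ∑ j, adjoint (A j) ∘L G ∘L A j = adjoint C ∘L C ∧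
    ∀ H : X →L[ℂ] X, H.IsPositive →
      (H - ∑ j, adjoint (A j) ∘L H ∘L A j - adjoint C ∘L C).IsPositive →
      (H - G).IsPositive := by
  have hgram : IsObservabilityGramian A C G := hG
  refine ⟨?_, fun H hH hstein => hgram.le_of_stein_le ((nonneg_iff_isPositive H).2 hH) ?_⟩
  · ext x
    simp [hgram.stein_apply x]
  · rwa [le_def, sub_add_eq_sub_sub_swap]

/-- If (C, A) is output-stable, the observability gramian `G = ∑_v A^{v*} C* C A^v`
(converging strongly) satisfies the Stein equation `G - ∑_j A_j* G A_j = C* C` and is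
the minimal positive semidefinite solution of the Stein inequality. -/
theorem stmt3 {d : ℕ} (A : Fin d → X →L[ℂ] X) (C : X →L[ℂ] Y) (G : X →L[ℂ] X)
    (hstable : ∀ x : X, Summable fun v : List (Fin d) => ‖C (wordProd A v x)‖ ^ 2)
    (hG : ∀ x : X, HasSum
      (fun v : List (Fin d) => adjoint (wordProd A v) ((adjoint C) (C (wordProd A v x))))
      (G x)) :
    G - ∑ j, adjoint (A j) ∘L G ∘L A j = adjoint C ∘L C ∧
    ∀ H : X →L[ℂ] X, H.IsPositive →
      (H - ∑ j, adjoint (A j) ∘L H ∘L A j - adjoint C ∘L C).IsPositive →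
      (H - G).IsPositive :=
  stmt3_general A C G hG

end
end

section
/- If the pair (C, A) is output-stable and exactly observable (i.e., the observability gramian G = sum_{v in F_d} A^{v*} C* C A^v is bounded and bounded below, say G >= epsilon I for some epsilon > 0), then the tuple A is strongly stable: sum over words v of length N of ||A^v x||^2 tends to 0 as N tends to infinity, for every x in X. -/
/-!
Applying the lower bound of the gramian to `A^w x` for a word `w` of length `N` gives
`ε ‖A^w x‖² ≤ ∑_v ‖C A^{vw} x‖²`. Summing over all `w` of length `N`, each word `vw` is counted
once, so `ε ∑_{|w| = N} ‖A^w x‖²` is bounded by the tail `∑_{|u| ≥ N} ‖C A^u x‖²` of the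
convergent output series, which tends to `0`.
-/

open ContinuousLinearMap

noncomputable section

variable {X Y : Type*}
  [NormedAddCommGroup X] [InnerProductSpace ℂ X] [CompleteSpace X]
  [NormedAddCommGroup Y] [InnerProductSpace ℂ Y] [CompleteSpace Y]

open Filter Topology

theorem List.tendsto_tsum_length_ge_zero {α G : Type*} [Finite α] [TopologicalSpace G]
    [AddCommGroup G] [IsTopologicalAddGroup G] (f : List α → G) :
    Tendsto (fun N => ∑' l : {l : List α // N ≤ l.length}, f l) atTop (𝓝 0) := by
  let F : ℕ → Finset (List α) := fun N => (List.finite_length_lt α N).toFinset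
  have hF : ∀ N l, l ∈ F N ↔ l.length < N := fun N l => Set.Finite.mem_toFinset _
  have hF_tendsto : Tendsto F atTop atTop :=
    tendsto_atTop_finset_of_monotone
      (fun m n hmn l hl => (hF n l).2 (((hF m l).1 hl).trans_le hmn))
      fun l => ⟨l.length + 1, (hF _ l).2 l.length.lt_succ_self⟩
  refine ((tendsto_tsum_compl_atTop_zero f).comp hF_tendsto).congr fun N => ?_
  exact (Equiv.subtypeEquivRight fun l => (hF N l).not.trans not_lt).tsum_eq (f ∘ Subtype.val)

theorem List.sum_tsum_append_ofFn_le {α : Type*} [Fintype α] {f : List α → ℝ}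
    (hf : Summable f) (hf0 : 0 ≤ f) (N : ℕ) :
    ∑ w : Fin N → α, ∑' v, f (v ++ List.ofFn w) ≤ ∑' l : {l : List α // N ≤ l.length}, f l := by
  let e : (Fin N → α) × List α → {l : List α // N ≤ l.length} :=
    fun p => ⟨p.2 ++ List.ofFn p.1, by simp⟩
  have he : Function.Injective e := by
    rintro ⟨w₁, v₁⟩ ⟨w₂, v₂⟩ h
    obtain ⟨hv, hw⟩ := List.append_inj' (congrArg Subtype.val h) (by simp)
    exact Prod.ext (List.ofFn_injective hw) hv
  have hfe : Summable (fun p => f (e p)) := (hf.subtype _).comp_injective he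
  calc ∑ w : Fin N → α, ∑' v, f (v ++ List.ofFn w)
      = ∑' p, f (e p) := by
        rw [← tsum_fintype (L := SummationFilter.unconditional _),
          hfe.tsum_prod' fun w => hfe.comp_injective (Prod.mk_right_injective w)]
    _ ≤ _ := hfe.tsum_le_tsum_of_inj e he (fun l _ => hf0 l) (fun _ => le_rfl) (hf.subtype _)

/-- If (C, A) is output-stable and exactly observable (the gramian is bounded below:
ε ‖x‖² ≤ ∑_v ‖C A^v x‖² for some ε > 0), then A is strongly stable. -/
theorem stmt7 {d : ℕ} (A : Fin d → X →L[ℂ] X) (C : X →L[ℂ] Y)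
    (hstable : ∀ x : X, Summable fun v : List (Fin d) => ‖C (wordProd A v x)‖ ^ 2)
    (ε : ℝ) (hε : 0 < ε)
    (hlow : ∀ x : X, ε * ‖x‖ ^ 2 ≤ ∑' v : List (Fin d), ‖C (wordProd A v x)‖ ^ 2) :
    ∀ x : X, Filter.Tendsto
      (fun N => ∑ w : Fin N → Fin d, ‖funProd A w x‖ ^ 2) Filter.atTop (nhds 0) := by
  intro x
  set f : List (Fin d) → ℝ := fun v => ‖C (wordProd A v x)‖ ^ 2
  have hbound : ∀ N, ∑ w : Fin N → Fin d, ‖funProd A w x‖ ^ 2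
      ≤ (∑' l : {l : List (Fin d) // N ≤ l.length}, f l) / ε := by
    intro N
    rw [le_div_iff₀ hε, Finset.sum_mul]
    calc ∑ w : Fin N → Fin d, ‖funProd A w x‖ ^ 2 * ε
        ≤ ∑ w : Fin N → Fin d, ∑' v, f (v ++ List.ofFn w) := by
          refine Finset.sum_le_sum fun w _ => ?_
          simpa [mul_comm, f, funProd, wordProd] using hlow (funProd A w x)
      _ ≤ _ := List.sum_tsum_append_ofFn_le (hstable x) (fun _ => sq_nonneg _) N
  refine squeeze_zero (fun N => Finset.sum_nonneg fun w _ => sq_nonneg _) hbound ?_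
  simpa using (List.tendsto_tsum_length_ge_zero f).div_const ε

end
end

section
/- Let (C, A) be an a-output-stable pair with abelianized observability gramian G^a = sum over n in Z_+^d of (n!/|n|!) * (sum over pairs of words v, u with abelianization n of A^{v^T *} C* C A^u), where v^T denotes the reversed word. Then G^a satisfies the reverse Stein inequality G^a - A_1* G^a A_1 - ... - A_d* G^a A_d <= C* C. -/
open ContinuousLinearMap

noncomputable section

variable {X Y : Type*}
  [NormedAddCommGroup X] [InnerProductSpace ℂ X] [CompleteSpace X]
  [NormedAddCommGroup Y] [InnerProductSpace ℂ Y] [CompleteSpace Y]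

/-- The weight `n!/|n|!` attached to a multi-index `n`. -/
def wt {d : ℕ} (n : Fin d → ℕ) : ℝ :=
  ((∏ i, Nat.factorial (n i) : ℕ) : ℝ) / ((Nat.factorial (∑ i, n i) : ℕ) : ℝ)

/-- The finite set of words of length `|n|` (encoded as functions `Fin |n| → Fin d`)
whose abelianization is the multi-index `n`. -/
def abWords {d : ℕ} (n : Fin d → ℕ) : Finset (Fin (∑ i, n i) → Fin d) :=
  Finset.univ.filter fun w => ∀ i, (List.ofFn w).count i = n i

/-!
Write `T_n := abOutput A C n = ∑_{u ∈ a⁻¹(n)} C A^u`, so that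
`⟪G^a x, x⟫ = ∑_n (n!/|n|!) ‖T_n x‖²`; in particular this quadratic form is real, which over `ℂ`
makes `G^a` self-adjoint. Splitting a word by its last letter gives
`T_n x = ∑_{n_j ≠ 0} T_{n - e_j} (A_j x)` for `n ≠ 0`. Cauchy–Schwarz with weights `n_j / |n|`,
together with `(n!/|n|!) · |n| / n_j = (n - e_j)!/|n - e_j|!`, bounds `(n!/|n|!) ‖T_n x‖²` by
`∑_{n_j ≠ 0} ((n - e_j)!/|n - e_j|!) ‖T_{n - e_j} (A_j x)‖²`. Summing over `n ≠ 0` and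
reindexing `n = m + e_j` gives `⟪G^a x, x⟫ ≤ ‖C x‖² + ∑_j ⟪G^a A_j x, A_j x⟫`.
-/

open scoped InnerProductSpace

lemma sub_single_add_single {ι : Type*} [DecidableEq ι] {n : ι → ℕ} {j : ι} (hj : n j ≠ 0) :
    n - Pi.single j 1 + Pi.single j 1 = n := by
  ext i
  rcases eq_or_ne i j with rfl | hij
  · simp only [Pi.add_apply, Pi.sub_apply, Pi.single_eq_same]
    omega
  · simp [hij]

lemma hasSum_ite_sub_single {ι α : Type*} [DecidableEq ι] [AddCommMonoid α] [TopologicalSpace α]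
    {f : (ι → ℕ) → α} {a : α} (j : ι) (hf : HasSum f a) :
    HasSum (fun n : ι → ℕ => if n j = 0 then 0 else f (n - Pi.single j 1)) a := by
  refine (Function.Injective.hasSum_iff (add_left_injective (Pi.single j 1)) fun n hn => ?_).mp ?_
  · rw [if_pos]
    by_contra hj
    exact hn ⟨_, sub_single_add_single hj⟩
  · convert hf using 1
    ext n
    simp

lemma norm_sum_sq_le_mul_sum_div {ι E : Type*} [SeminormedAddCommGroup E] (s : Finset ι)
    (y : ι → E) {c : ι → ℝ} (hc : ∀ i ∈ s, 0 < c i) :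
    ‖∑ i ∈ s, y i‖ ^ 2 ≤ (∑ i ∈ s, c i) * ∑ i ∈ s, ‖y i‖ ^ 2 / c i := by
  calc ‖∑ i ∈ s, y i‖ ^ 2 ≤ (∑ i ∈ s, ‖y i‖) ^ 2 := by gcongr; exact norm_sum_le s y
    _ ≤ (∑ i ∈ s, c i) * ∑ i ∈ s, ‖y i‖ ^ 2 / c i :=
      Finset.sum_sq_le_sum_mul_sum_of_sq_le_mul s (fun i hi => (hc i hi).le)
        (fun i hi => div_nonneg (sq_nonneg _) (hc i hi).le)
        fun i hi => (mul_div_cancel₀ _ (hc i hi).ne').ge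

section Words

variable {d : ℕ}

def abLists (n : Fin d → ℕ) : Finset (List (Fin d)) := (abWords n).image List.ofFn

lemma mem_abLists {n : Fin d → ℕ} {l : List (Fin d)} :
    l ∈ abLists n ↔ ∀ i, l.count i = n i := by
  refine ⟨?_, fun h => ?_⟩
  · intro hl
    obtain ⟨w, hw, rfl⟩ := Finset.mem_image.mp hl
    exact (Finset.mem_filter.mp hw).2
  · have hlen : l.length = ∑ i, n i := by
      simp_rw [← h]
      simpa using
        (Multiset.sum_count_eq_card (s := .univ) (m := (l : Multiset (Fin d))) (by simp)).symm
    have hl : List.ofFn (fun k => l.get (Fin.cast hlen.symm k)) = l :=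
      List.ext_get (by simp [hlen]) fun _ _ _ => by simp
    exact Finset.mem_image.mpr ⟨_, Finset.mem_filter.mpr ⟨Finset.mem_univ _, by rwa [hl]⟩, hl⟩

lemma count_append_singleton (l : List (Fin d)) (i j : Fin d) :
    (l ++ [j]).count i = l.count i + (Pi.single j 1 : Fin d → ℕ) i := by
  rcases eq_or_ne i j with rfl | hij
  · simp
  · simp [hij, Ne.symm hij]

lemma append_singleton_mem_abLists_iff {n : Fin d → ℕ} {l : List (Fin d)} {j : Fin d} :
    l ++ [j] ∈ abLists (n + Pi.single j 1) ↔ l ∈ abLists n := by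
  simp only [mem_abLists, count_append_singleton, Pi.add_apply, Nat.add_right_cancel_iff]

lemma abLists_zero : abLists (0 : Fin d → ℕ) = {[]} := by
  ext l
  rcases l with _ | ⟨a, l⟩
  · simp [mem_abLists]
  · simpa [mem_abLists] using ⟨a, by simp⟩

lemma abLists_eq_image_sigma {n : Fin d → ℕ} (hn : n ≠ 0) :
    abLists n = ((Finset.univ.filter (n · ≠ 0)).sigma
      fun j => abLists (n - Pi.single j 1)).image fun p => p.2 ++ [p.1] := by
  ext l
  simp only [Finset.mem_image, Finset.mem_sigma, Finset.mem_filter, Finset.mem_univ, true_and,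
    Sigma.exists]
  constructor
  · intro hl
    rcases l.eq_nil_or_concat with rfl | ⟨l', j, rfl⟩
    · exact absurd (funext fun i => (mem_abLists.mp hl i).symm) hn
    · rw [List.concat_eq_append] at hl ⊢
      have hj : n j ≠ 0 := by simp [← mem_abLists.mp hl j]
      refine ⟨j, l', ⟨hj, ?_⟩, rfl⟩
      rwa [← append_singleton_mem_abLists_iff, sub_single_add_single hj]
  · rintro ⟨j, l', ⟨hj, hl'⟩, rfl⟩
    rw [← sub_single_add_single hj]
    exact append_singleton_mem_abLists_iff.mpr hl'

end Words

section Weights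

variable {d : ℕ}

lemma sum_add_single (m : Fin d → ℕ) (j : Fin d) :
    ∑ i, (m + Pi.single j 1 : Fin d → ℕ) i = ∑ i, m i + 1 := by
  simp [Finset.sum_add_distrib]

lemma prod_factorial_add_single (m : Fin d → ℕ) (j : Fin d) :
    ∏ i, ((m + Pi.single j 1 : Fin d → ℕ) i).factorial = (m j + 1) * ∏ i, (m i).factorial := by
  have hoff : ∀ i ∈ Finset.univ.erase j, (m + Pi.single j 1 : Fin d → ℕ) i = m i := fun i hi => by
    rw [Pi.add_apply, Pi.single_eq_of_ne (Finset.ne_of_mem_erase hi), add_zero]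
  rw [← Finset.mul_prod_erase _ _ (Finset.mem_univ j),
    ← Finset.mul_prod_erase _ _ (Finset.mem_univ j),
    Finset.prod_congr rfl fun i hi => congrArg Nat.factorial (hoff i hi)]
  simp [Nat.factorial_succ, mul_assoc]

lemma wt_add_single_mul (m : Fin d → ℕ) (j : Fin d) :
    wt (m + Pi.single j 1) * (∑ i, m i + 1 : ℕ) = wt m * (m j + 1 : ℕ) := by
  simp only [wt, sum_add_single, prod_factorial_add_single, Nat.factorial_succ]
  field_simp
  push_cast
  ring

lemma wt_sub_single_mul {n : Fin d → ℕ} {j : Fin d} (hj : n j ≠ 0) :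
    wt (n - Pi.single j 1) * n j = wt n * ∑ i, n i := by
  have h := wt_add_single_mul (n - Pi.single j 1) j
  rw [← sum_add_single, sub_single_add_single hj] at h
  have hnj : (n - Pi.single j 1 : Fin d → ℕ) j + 1 = n j := by
    simp only [Pi.sub_apply, Pi.single_eq_same]
    omega
  rw [hnj] at h
  exact_mod_cast h.symm

end Weights

lemma wt_mul_norm_sum_sq_le {d : ℕ} {F : Type*} [SeminormedAddCommGroup F] (n : Fin d → ℕ)
    (y : Fin d → F) :
    wt n * ‖∑ j ∈ Finset.univ.filter (n · ≠ 0), y j‖ ^ 2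
      ≤ ∑ j ∈ Finset.univ.filter (n · ≠ 0), wt (n - Pi.single j 1) * ‖y j‖ ^ 2 := by
  have hwt : 0 ≤ wt n := by unfold wt; positivity
  have hcs := norm_sum_sq_le_mul_sum_div (Finset.univ.filter (n · ≠ 0)) y
    (c := fun j => (n j : ℝ)) (by simp [Nat.pos_iff_ne_zero])
  rw [← Nat.cast_sum, Finset.sum_filter_ne_zero] at hcs
  calc wt n * ‖∑ j ∈ Finset.univ.filter (n · ≠ 0), y j‖ ^ 2
      ≤ wt n * ((∑ i, n i : ℕ) * ∑ j ∈ Finset.univ.filter (n · ≠ 0), ‖y j‖ ^ 2 / n j) := by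
        gcongr
    _ = ∑ j ∈ Finset.univ.filter (n · ≠ 0), wt (n - Pi.single j 1) * ‖y j‖ ^ 2 := by
      rw [Finset.mul_sum, Finset.mul_sum]
      refine Finset.sum_congr rfl fun j hj => ?_
      have hnj : n j ≠ 0 := (Finset.mem_filter.mp hj).2
      have hnj' : (n j : ℝ) ≠ 0 := by exact_mod_cast hnj
      rw [← mul_assoc, ← wt_sub_single_mul hnj]
      field_simp

lemma le_norm_sq_add_sum_of_hasSum {d : ℕ} {E F : Type*} [SeminormedAddCommGroup F]
    (A : Fin d → E → E) (C : E → F) {T : (Fin d → ℕ) → E → F} (hT₀ : T 0 = C)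
    (hT : ∀ n ≠ 0, ∀ x, T n x = ∑ j ∈ Finset.univ.filter (n · ≠ 0), T (n - Pi.single j 1) (A j x))
    {r : E → ℝ} (hr : ∀ x, HasSum (fun n => wt n * ‖T n x‖ ^ 2) (r x)) (x : E) :
    r x ≤ ‖C x‖ ^ 2 + ∑ j, r (A j x) := by
  have hrhs : HasSum (fun n : Fin d → ℕ => (if n = 0 then ‖C x‖ ^ 2 else 0) +
      ∑ j, if n j = 0 then 0 else wt (n - Pi.single j 1) * ‖T (n - Pi.single j 1) (A j x)‖ ^ 2)
      (‖C x‖ ^ 2 + ∑ j, r (A j x)) :=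
    (hasSum_ite_eq 0 _).add (hasSum_sum fun j _ => hasSum_ite_sub_single j (hr (A j x)))
  refine hasSum_le (fun n => ?_) (hr x) hrhs
  rcases eq_or_ne n 0 with rfl | hn
  · simp [hT₀, wt]
  · simpa [hn, hT n hn, Finset.sum_filter] using
      wt_mul_norm_sum_sq_le n fun j => T (n - Pi.single j 1) (A j x)

section Operators

variable {d : ℕ} (A : Fin d → X →L[ℂ] X) (C : X →L[ℂ] Y)

def abOutput (n : Fin d → ℕ) : X →L[ℂ] Y := ∑ l ∈ abLists n, C ∘L wordProd A l

omit [CompleteSpace X] [CompleteSpace Y] in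
lemma abOutput_eq_sum_abWords (n : Fin d → ℕ) :
    abOutput A C n = ∑ u ∈ abWords n, C ∘L funProd A u :=
  Finset.sum_image fun _ _ _ _ h => List.ofFn_injective h

omit [CompleteSpace X] [CompleteSpace Y] in
lemma abOutput_zero : abOutput A C 0 = C := by
  simp [abOutput, abLists_zero, wordProd, one_def]

omit [CompleteSpace X] in
lemma wordProd_append_singleton (l : List (Fin d)) (j : Fin d) :
    wordProd A (l ++ [j]) = wordProd A l ∘L A j := by
  simp [wordProd, mul_def]

omit [CompleteSpace X] [CompleteSpace Y] in
lemma abOutput_apply_of_ne_zero {n : Fin d → ℕ} (hn : n ≠ 0) (x : X) :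
    abOutput A C n x =
      ∑ j ∈ Finset.univ.filter (n · ≠ 0), abOutput A C (n - Pi.single j 1) (A j x) := by
  rw [abOutput, abLists_eq_image_sigma hn, Finset.sum_image, Finset.sum_sigma]
  · simp [abOutput, wordProd_append_singleton, sum_apply]
  · rintro ⟨j, l⟩ - ⟨j', l'⟩ - h
    obtain ⟨rfl, h'⟩ := List.append_inj' h rfl
    cases h'
    rfl

lemma sum_abWords_adjoint_apply (n : Fin d → ℕ) (x : X) :
    ∑ v ∈ abWords n, ∑ u ∈ abWords n, adjoint (funProd A v) (adjoint C (C (funProd A u x)))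
      = adjoint (abOutput A C n) (abOutput A C n x) := by
  simp only [abOutput_eq_sum_abWords, map_sum, adjoint_comp, sum_apply, comp_apply]
  exact Finset.sum_comm

end Operators

lemma exists_hasSum_inner_self {d : ℕ} (A : Fin d → X →L[ℂ] X) (C : X →L[ℂ] Y) {Ga : X →L[ℂ] X}
    (hGa : ∀ x : X, HasSum (fun n : Fin d → ℕ => wt n • ∑ v ∈ abWords n, ∑ u ∈ abWords n,
      adjoint (funProd A v) ((adjoint C) (C (funProd A u x)))) (Ga x)) (x : X) :
    ∃ r : ℝ, HasSum (fun n => wt n * ‖abOutput A C n x‖ ^ 2) r ∧ ⟪Ga x, x⟫_ℂ = r := by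
  have hterm (n : Fin d → ℕ) : ⟪x, wt n • adjoint (abOutput A C n) (abOutput A C n x)⟫_ℂ
      = ((wt n * ‖abOutput A C n x‖ ^ 2 : ℝ) : ℂ) := by
    rw [← Complex.coe_smul, inner_smul_right, adjoint_inner_right, inner_self_eq_norm_sq_to_K]
    push_cast
    rfl
  have h := (innerSL ℂ x).hasSum (hGa x)
  simp only [sum_abWords_adjoint_apply, innerSL_apply_apply, hterm] at h
  have hs := Complex.summable_ofReal.mp h.summable
  refine ⟨_, hs.hasSum, ?_⟩
  rw [← inner_conj_symm, h.unique (Complex.hasSum_ofReal.mpr hs.hasSum), Complex.conj_ofReal]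

/-- The abelianized observability gramian
`G^a = ∑_n (n!/|n|!) ∑_{v,u ∈ a⁻¹(n)} A^{vᵀ*} C* C A^u` of an a-output-stable pair
satisfies the reverse Stein inequality `G^a - ∑_j A_j* G^a A_j ≤ C* C`. -/
theorem stmt8 {d : ℕ} (A : Fin d → X →L[ℂ] X) (C : X →L[ℂ] Y) (Ga : X →L[ℂ] X)
    (hGa : ∀ x : X, HasSum (fun n : Fin d → ℕ =>
      wt n • ∑ v ∈ abWords n, ∑ u ∈ abWords n,
        adjoint (funProd A v) ((adjoint C) (C (funProd A u x)))) (Ga x)) :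
    (adjoint C ∘L C + ∑ j, adjoint (A j) ∘L Ga ∘L A j - Ga).IsPositive := by
  choose r hr hinner using exists_hasSum_inner_self A C hGa
  have hstein := le_norm_sq_add_sum_of_hasSum (fun j => A j) C
    (congrArg DFunLike.coe (abOutput_zero A C)) (fun _ hn => abOutput_apply_of_ne_zero A C hn) hr
  rw [isPositive_iff_complex]
  intro x
  have hx : ⟪(adjoint C ∘L C + ∑ j, adjoint (A j) ∘L Ga ∘L A j - Ga) x, x⟫_ℂ
      = ((‖C x‖ ^ 2 + ∑ j, r (A j x) - r x : ℝ) : ℂ) := by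
    simp [adjoint_inner_left, hinner, inner_self_eq_norm_sq_to_K]
  rw [hx, RCLike.re_to_complex, Complex.ofReal_re]
  exact ⟨rfl, sub_nonneg.mpr (hstein x)⟩
end
end

section
/- If the pair (C, A) is output-stable, then it is also a-output-stable and the gramian inequality G^a <= G holds, where G = sum_{v in F_d} A^{v^T *} C* C A^v is the noncommutative observability gramian and G^a = sum_{n in Z_+^d} (n!/|n|!) || sum_{v: a(v)=n} C A^v x ||^2 defines the abelianized gramian via <G^a x, x>. In particular, for every x, sum_{n} (n!/|n|!) || sum_{v: a(v)=n} C A^v x ||^2 <= sum_{v in F_d} || C A^v x ||^2. -/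
open ContinuousLinearMap

noncomputable section

variable {X Y : Type*}
  [NormedAddCommGroup X] [InnerProductSpace ℂ X] [CompleteSpace X]
  [NormedAddCommGroup Y] [InnerProductSpace ℂ Y] [CompleteSpace Y]

/-!
By Cauchy–Schwarz, `‖∑_{v ∈ a⁻¹(n)} C A^v x‖² ≤ #a⁻¹(n) · ∑_{v ∈ a⁻¹(n)} ‖C A^v x‖²`, and
`#a⁻¹(n) ≤ |n|!/n!`: the words with abelianization `n` form a single orbit of the symmetric group
on `|n|` letters acting by permuting positions, and the stabilizer of a word has `n!` elements.
Summing over `n`, the fibres `a⁻¹(n)` are disjoint sets of words, so the total is at most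
`∑_v ‖C A^v x‖²`.
-/

open Finset

theorem List.count_ofFn {α : Type*} [DecidableEq α] {N : ℕ} (w : Fin N → α) (a : α) :
    (List.ofFn w).count a = #{i | w i = a} := by
  rw [← Multiset.coe_count, ← Fin.univ_val_map, Multiset.count_map, card_def, filter_val]
  simp only [eq_comm]

theorem norm_sum_sq_le_card_mul_sum_norm_sq {ι E : Type*} [SeminormedAddCommGroup E]
    (s : Finset ι) (f : ι → E) : ‖∑ i ∈ s, f i‖ ^ 2 ≤ #s * ∑ i ∈ s, ‖f i‖ ^ 2 :=
  (pow_le_pow_left₀ (norm_nonneg _) (norm_sum_le _ _) 2).trans sq_sum_le_card_mul_sum_sq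

theorem card_filter_comp_perm_eq {α ι : Type*} [Fintype α] [DecidableEq ι] (v : α → ι)
    (g : Equiv.Perm α) (i : ι) : #{a | (v ∘ g) a = i} = #{a | v a = i} :=
  card_equiv g fun a => by simp

theorem exists_perm_comp_eq_of_card_filter_eq {α ι : Type*} [Fintype α] [DecidableEq ι]
    {v w : α → ι} (h : ∀ i, #{a | w a = i} = #{a | v a = i}) :
    ∃ e : Equiv.Perm α, v ∘ e = w :=
  ⟨Equiv.ofFiberEquiv fun i => Fintype.equivOfCardEq <| by
      simpa only [Fintype.card_subtype] using h i,
    funext <| Equiv.ofFiberEquiv_map _⟩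

theorem card_filter_card_fiber_eq_mul_prod_factorial_le {α ι : Type*} [Fintype α] [DecidableEq α] [Fintype ι]
    [DecidableEq ι] (v : α → ι) :
    #{w : α → ι | ∀ i, #{a | w a = i} = #{a | v a = i}} * ∏ i, Nat.factorial #{a | v a = i}
      ≤ Nat.factorial (Fintype.card α) := by
  have hstab : #{g : Equiv.Perm α | v ∘ g = v} = ∏ i, Nat.factorial #{a | v a = i} := by
    simp only [← Fintype.card_subtype, DomMulAct.stabilizer_card]
  rw [mul_comm, ← Fintype.card_perm, ← card_univ]
  refine mul_card_image_le_card_of_maps_to (f := fun g : Equiv.Perm α => v ∘ g)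
    (fun g _ => mem_filter.2 ⟨mem_univ _, card_filter_comp_perm_eq v g⟩) _ fun w hw => ?_
  -- each fibre of `g ↦ v ∘ g` over its image contains a coset of the stabilizer of `v`
  obtain ⟨e, rfl⟩ := exists_perm_comp_eq_of_card_filter_eq (mem_filter.1 hw).2
  rw [← hstab]
  refine card_le_card_of_injOn (· * e) (fun g hg => ?_) (mul_left_injective e).injOn
  replace hg : v ∘ g = v := by simpa using hg
  simp only [coe_filter, mem_univ, true_and, Set.mem_ofPred_eq]
  rw [Equiv.Perm.coe_mul, ← Function.comp_assoc, hg]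

theorem mem_abWords_iff {d : ℕ} {n : Fin d → ℕ} {w : Fin (∑ i, n i) → Fin d} :
    w ∈ abWords n ↔ ∀ i, #{a | w a = i} = n i := by
  simp only [abWords, mem_filter, mem_univ, true_and, List.count_ofFn]

theorem card_abWords_mul_prod_factorial_le {d : ℕ} (n : Fin d → ℕ) :
    #(abWords n) * ∏ i, Nat.factorial (n i) ≤ Nat.factorial (∑ i, n i) := by
  obtain h | ⟨v, hv⟩ := (abWords n).eq_empty_or_nonempty
  · simp [h]
  have hv' := mem_abWords_iff.1 hv
  have habWords :
      abWords n = ({w | ∀ i, #{a | w a = i} = #{a | v a = i}} : Finset (Fin (∑ i, n i) → Fin d)) :=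
    Finset.ext fun w => by simp only [mem_abWords_iff, hv', mem_filter, mem_univ, true_and]
  simpa only [habWords, hv', Fintype.card_fin] using card_filter_card_fiber_eq_mul_prod_factorial_le v

theorem wt_nonneg {d : ℕ} (n : Fin d → ℕ) : 0 ≤ wt n := by
  unfold wt; positivity

theorem wt_mul_card_abWords_le_one {d : ℕ} (n : Fin d → ℕ) : wt n * #(abWords n) ≤ 1 := by
  rw [wt, div_mul_eq_mul_div, div_le_one (by positivity), mul_comm]
  exact_mod_cast card_abWords_mul_prod_factorial_le n

theorem wt_mul_norm_sum_abWords_sq_le {d : ℕ} {E : Type*} [SeminormedAddCommGroup E]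
    (n : Fin d → ℕ) (f : (Fin (∑ i, n i) → Fin d) → E) :
    wt n * ‖∑ w ∈ abWords n, f w‖ ^ 2 ≤ ∑ w ∈ abWords n, ‖f w‖ ^ 2 :=
  calc wt n * ‖∑ w ∈ abWords n, f w‖ ^ 2
      ≤ wt n * (#(abWords n) * ∑ w ∈ abWords n, ‖f w‖ ^ 2) :=
        mul_le_mul_of_nonneg_left (norm_sum_sq_le_card_mul_sum_norm_sq _ _) (wt_nonneg n)
    _ = wt n * #(abWords n) * ∑ w ∈ abWords n, ‖f w‖ ^ 2 := (mul_assoc _ _ _).symm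
    _ ≤ ∑ w ∈ abWords n, ‖f w‖ ^ 2 :=
        mul_le_of_le_one_left (by positivity) (wt_mul_card_abWords_le_one n)

theorem injective_ofFn_sigma_abWords {d : ℕ} :
    Function.Injective fun p : Σ n : Fin d → ℕ, abWords n => List.ofFn p.2.1 := by
  rintro ⟨n, w, hw⟩ ⟨m, u, hu⟩ (h : List.ofFn w = List.ofFn u)
  obtain rfl : n = m := funext fun i => by
    rw [← (mem_filter.1 hw).2 i, ← (mem_filter.1 hu).2 i, h]
  obtain rfl := List.ofFn_injective h
  rfl

theorem summable_sum_abWords {d : ℕ} {f : List (Fin d) → ℝ} (hf : Summable f) :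
    Summable fun n : Fin d → ℕ => ∑ w ∈ abWords n, f (List.ofFn w) :=
  (hf.comp_injective injective_ofFn_sigma_abWords).sigma.congr fun n =>
    (abWords n).tsum_subtype fun w => f (List.ofFn w)

theorem tsum_sum_abWords_le {d : ℕ} {f : List (Fin d) → ℝ} (hf₀ : 0 ≤ f) (hf : Summable f) :
    ∑' n : Fin d → ℕ, ∑ w ∈ abWords n, f (List.ofFn w) ≤ ∑' v, f v := by
  have hg : Summable fun p : Σ n : Fin d → ℕ, abWords n => f (List.ofFn p.2.1) :=
    hf.comp_injective injective_ofFn_sigma_abWords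
  calc ∑' n : Fin d → ℕ, ∑ w ∈ abWords n, f (List.ofFn w)
      = ∑' p : Σ n : Fin d → ℕ, abWords n, f (List.ofFn p.2.1) := by
        rw [hg.tsum_sigma]
        exact tsum_congr fun n => ((abWords n).tsum_subtype fun w => f (List.ofFn w)).symm
    _ ≤ ∑' v, f v :=
        hg.tsum_le_tsum_of_inj _ injective_ofFn_sigma_abWords (fun v _ => hf₀ v)
          (fun _ => le_rfl) hf

/-- Output stability implies a-output stability together with the gramian inequality:
for each x, ∑_n (n!/|n|!) ‖∑_{v ∈ a⁻¹(n)} C A^v x‖² converges and is at most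
∑_v ‖C A^v x‖². -/
theorem stmt11 {d : ℕ} (A : Fin d → X →L[ℂ] X) (C : X →L[ℂ] Y)
    (hstable : ∀ x : X, Summable fun v : List (Fin d) => ‖C (wordProd A v x)‖ ^ 2) :
    ∀ x : X,
      Summable (fun n : Fin d → ℕ =>
        wt n * ‖∑ v ∈ abWords n, C (funProd A v x)‖ ^ 2) ∧
      (∑' n : Fin d → ℕ, wt n * ‖∑ v ∈ abWords n, C (funProd A v x)‖ ^ 2)
        ≤ ∑' v : List (Fin d), ‖C (wordProd A v x)‖ ^ 2 := by
  intro x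
  have hbound (n : Fin d → ℕ) : wt n * ‖∑ v ∈ abWords n, C (funProd A v x)‖ ^ 2
      ≤ ∑ v ∈ abWords n, ‖C (wordProd A (List.ofFn v) x)‖ ^ 2 :=
    wt_mul_norm_sum_abWords_sq_le n _
  have hdom := summable_sum_abWords (hstable x)
  have hsummable := hdom.of_nonneg_of_le (fun n => mul_nonneg (wt_nonneg n) (by positivity)) hbound
  refine ⟨hsummable, ?_⟩
  calc ∑' n : Fin d → ℕ, wt n * ‖∑ v ∈ abWords n, C (funProd A v x)‖ ^ 2
      ≤ ∑' n : Fin d → ℕ, ∑ v ∈ abWords n, ‖C (wordProd A (List.ofFn v) x)‖ ^ 2 :=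
        hsummable.tsum_le_tsum hbound hdom
    _ ≤ ∑' v : List (Fin d), ‖C (wordProd A v x)‖ ^ 2 :=
        tsum_sum_abWords_le (fun v => by positivity) (hstable x)

end
end

section
/- Let (C, A) be output-stable. The kernel of the noncommutative observability gramian G equals the intersection over all words v in F_d of the kernels of C A^v, this subspace is invariant under each A_j, and it is contained in the kernel of the abelianized gramian G^a. Moreover, the kernel of G^a is invariant under each A_j if and only if ker G^a = ker G. -/
/-!
Both gramians are weighted sums `∑ wᵢ Tᵢ* Tᵢ` with positive weights, so `re ⟪x, G x⟫` is
`∑ wᵢ ‖Tᵢ x‖²` and the kernel is the joint kernel of the `Tᵢ`: for `G` these are the `C A^v`,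
for `G^a` the sums `∑_{a(v) = n} C A^v`. The term `n = 0` of the latter is `C` itself, so an
`A`-invariant `ker G^a` is killed by every `C A^v`, i.e. lies in `ker G`.
-/

open ContinuousLinearMap

noncomputable section

variable {X Y : Type*}
  [NormedAddCommGroup X] [InnerProductSpace ℂ X] [CompleteSpace X]
  [NormedAddCommGroup Y] [InnerProductSpace ℂ Y] [CompleteSpace Y]

section WeightedGramian

variable {ι 𝕜 E F : Type*} [RCLike 𝕜]
  [NormedAddCommGroup E] [InnerProductSpace 𝕜 E] [CompleteSpace E]
  [NormedAddCommGroup F] [InnerProductSpace 𝕜 F] [CompleteSpace F]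
  {T : ι → E →L[𝕜] F} {w : ι → ℝ} {x g : E}

theorem hasSum_re_inner_of_hasSum_smul_adjoint_apply
    (h : HasSum (fun i => (w i : 𝕜) • adjoint (T i) (T i x)) g) :
    HasSum (fun i => w i * ‖T i x‖ ^ 2) (RCLike.re (inner 𝕜 x g)) := by
  simpa [inner_smul_right, adjoint_inner_right, ← sq] using
    (h.mapL (innerSL 𝕜 x)).mapL RCLike.reCLM

theorem eq_zero_iff_of_hasSum_smul_adjoint_apply (hw : ∀ i, 0 < w i)
    (h : HasSum (fun i => (w i : 𝕜) • adjoint (T i) (T i x)) g) :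
    g = 0 ↔ ∀ i, T i x = 0 := by
  constructor
  · rintro rfl i
    have h0 := hasSum_re_inner_of_hasSum_smul_adjoint_apply h
    rw [inner_zero_right, map_zero,
      hasSum_zero_iff_of_nonneg fun i => mul_nonneg (hw i).le (sq_nonneg _)] at h0
    simpa [(hw i).ne'] using congrFun h0 i
  · intro hT
    exact h.unique (by simp [hT])

end WeightedGramian

section Words

variable {E : Type*} [NormedAddCommGroup E] [InnerProductSpace ℂ E] {d : ℕ}
  (A : Fin d → E →L[ℂ] E)

theorem wordProd_cons_apply (j : Fin d) (v : List (Fin d)) (x : E) :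
    wordProd A (j :: v) x = A j (wordProd A v x) := by
  simp [wordProd]

theorem wordProd_concat_apply (v : List (Fin d)) (j : Fin d) (x : E) :
    wordProd A (v ++ [j]) x = wordProd A v (A j x) := by
  simp [wordProd, List.prod_append]

theorem wordProd_apply_of_invariant {p : E → Prop} (hp : ∀ j y, p y → p (A j y)) {x : E}
    (hx : p x) (v : List (Fin d)) : p (wordProd A v x) := by
  induction v with
  | nil => simpa [wordProd] using hx
  | cons j v ih => simpa [wordProd_cons_apply] using hp j _ ih

theorem wt_pos (n : Fin d → ℕ) : 0 < wt n := by
  unfold wt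
  positivity

theorem sum_abWords_zero {M : Type*} [AddCommMonoid M] (f : List (Fin d) → M) :
    ∑ w ∈ abWords (0 : Fin d → ℕ), f (List.ofFn w) = f [] := by
  have huniv : abWords (0 : Fin d → ℕ) = Finset.univ := by
    ext w
    simp [abWords]
  have : IsEmpty (Fin (∑ i, (0 : Fin d → ℕ) i)) := by simpa using Fin.isEmpty'
  simp [huniv]

end Words

section ObservabilityGramian

variable {d : ℕ} (A : Fin d → X →L[ℂ] X) (C : X →L[ℂ] Y)

theorem gramian_eq_zero_iff {G : X →L[ℂ] X} (hG : ∀ x : X, HasSum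
      (fun v : List (Fin d) => adjoint (wordProd A v) ((adjoint C) (C (wordProd A v x))))
      (G x)) (x : X) :
    G x = 0 ↔ ∀ v : List (Fin d), C (wordProd A v x) = 0 :=
  eq_zero_iff_of_hasSum_smul_adjoint_apply (T := fun v => C ∘L wordProd A v) (w := 1)
    (fun _ => one_pos) (by simpa [adjoint_comp] using hG x)

theorem abGramian_eq_zero_iff {Ga : X →L[ℂ] X} (hGa : ∀ x : X, HasSum (fun n : Fin d → ℕ =>
      wt n • ∑ v ∈ abWords n, ∑ u ∈ abWords n,
        adjoint (funProd A v) ((adjoint C) (C (funProd A u x)))) (Ga x)) (x : X) :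
    Ga x = 0 ↔ ∀ n : Fin d → ℕ, ∑ u ∈ abWords n, C (funProd A u x) = 0 := by
  set T : (Fin d → ℕ) → X →L[ℂ] Y := fun n => ∑ u ∈ abWords n, C ∘L funProd A u
  refine (eq_zero_iff_of_hasSum_smul_adjoint_apply (T := T) (x := x) wt_pos ?_).trans ?_
  · convert hGa x using 2 with n
    rw [RCLike.real_smul_eq_coe_smul (K := ℂ)]
    simp only [T, map_sum, sum_apply, adjoint_comp, comp_apply]
    rw [Finset.sum_comm]
  · simp only [T, sum_apply, comp_apply]

end ObservabilityGramian

theorem stmt12_general {d : ℕ} (A : Fin d → X →L[ℂ] X) (C : X →L[ℂ] Y) (G Ga : X →L[ℂ] X)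
    (hG : ∀ x : X, HasSum
      (fun v : List (Fin d) => adjoint (wordProd A v) ((adjoint C) (C (wordProd A v x))))
      (G x))
    (hGa : ∀ x : X, HasSum (fun n : Fin d → ℕ =>
      wt n • ∑ v ∈ abWords n, ∑ u ∈ abWords n,
        adjoint (funProd A v) ((adjoint C) (C (funProd A u x)))) (Ga x)) :
    (∀ x : X, G x = 0 ↔ ∀ v : List (Fin d), C (wordProd A v x) = 0) ∧
    (∀ x : X, G x = 0 → ∀ j, G (A j x) = 0) ∧
    (∀ x : X, G x = 0 → Ga x = 0) ∧
    ((∀ j, ∀ x : X, Ga x = 0 → Ga (A j x) = 0) ↔ (∀ x : X, Ga x = 0 ↔ G x = 0)) := by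
  have hker := gramian_eq_zero_iff A C hG
  have hkerAb := abGramian_eq_zero_iff A C hGa
  have hinvG : ∀ x : X, G x = 0 → ∀ j, G (A j x) = 0 := fun x hx j =>
    (hker _).2 fun v => by simpa [wordProd_concat_apply] using (hker x).1 hx (v ++ [j])
  have hGGa : ∀ x : X, G x = 0 → Ga x = 0 := fun x hx =>
    (hkerAb x).2 fun n => Finset.sum_eq_zero fun u _ => (hker x).1 hx (List.ofFn u)
  have hC : ∀ x : X, Ga x = 0 → C x = 0 := fun x hx => calc
    C x = C (wordProd A [] x) := by simp [wordProd]
    _ = ∑ u ∈ abWords 0, C (funProd A u x) := (sum_abWords_zero fun v => C (wordProd A v x)).symm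
    _ = 0 := (hkerAb x).1 hx 0
  refine ⟨hker, hinvG, hGGa, fun hinv x => ⟨fun hx => ?_, hGGa x⟩,
    fun h j x hx => (h _).2 (hinvG x ((h x).1 hx) j)⟩
  exact (hker x).2 fun v =>
    hC _ (wordProd_apply_of_invariant A (p := fun y => Ga y = 0) hinv hx v)

/-- Kernels of the gramians: ker G is the joint kernel of the C A^v and is
A_j-invariant; ker G ⊆ ker G^a; and ker G^a is A_j-invariant iff ker G^a = ker G. -/
theorem stmt12 {d : ℕ} (A : Fin d → X →L[ℂ] X) (C : X →L[ℂ] Y) (G Ga : X →L[ℂ] X)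
    (hstable : ∀ x : X, Summable fun v : List (Fin d) => ‖C (wordProd A v x)‖ ^ 2)
    (hG : ∀ x : X, HasSum
      (fun v : List (Fin d) => adjoint (wordProd A v) ((adjoint C) (C (wordProd A v x))))
      (G x))
    (hGa : ∀ x : X, HasSum (fun n : Fin d → ℕ =>
      wt n • ∑ v ∈ abWords n, ∑ u ∈ abWords n,
        adjoint (funProd A v) ((adjoint C) (C (funProd A u x)))) (Ga x)) :
    (∀ x : X, G x = 0 ↔ ∀ v : List (Fin d), C (wordProd A v x) = 0) ∧
    (∀ x : X, G x = 0 → ∀ j, G (A j x) = 0) ∧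
    (∀ x : X, G x = 0 → Ga x = 0) ∧
    ((∀ j, ∀ x : X, Ga x = 0 → Ga (A j x) = 0) ↔ (∀ x : X, Ga x = 0 ↔ G x = 0)) :=
  stmt12_general A C G Ga hG hGa

end
end
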